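/- arXiv:2409.12571 — 2 statements merged into one kernel-verified Lean document; each statement's English description precedes it below -/
import Mathlib

section
/- For any α, β ∈ ℝ and f ∈ C¹_c(ℝⁿ \ {0}), ‖T_β(f)‖_α² = ‖T_α(f)‖_α² + ((β−α)²/4) ‖f‖_{α+2}², where T_γ(f) = ∂_r f + ((n−2−γ)/(2r)) f and ‖g‖_δ² = ∫_{ℝⁿ} |g|² |x|^{−δ} dx. -/
open MeasureTheory Real RealInnerProductSpace

noncomputable section

abbrev Euc (n : ℕ) := EuclideanSpace ℝ (Fin n)

/-- radial derivative ∂_r f = (x/|x|)·∇f -/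
noncomputable def rDeriv (n : ℕ) (f : Euc n → ℝ) (x : Euc n) : ℝ :=
  inner ℝ x (gradient f x) / ‖x‖

/-- T_α f = ∂_r f + ((n-2-α)/(2r)) f -/
noncomputable def Tw (n : ℕ) (α : ℝ) (f : Euc n → ℝ) (x : Euc n) : ℝ :=
  rDeriv n f x + (((n : ℝ) - 2 - α) / (2 * ‖x‖)) * f x

/-- spherical derivative L_j f = ∂_j f − (x_j/r) ∂_r f -/
noncomputable def Lop (n : ℕ) (j : Fin n) (f : Euc n → ℝ) (x : Euc n) : ℝ :=
  fderiv ℝ f x (EuclideanSpace.single j 1) - (x j / ‖x‖) * rDeriv n f x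

/-- Euclidean Laplacian as sum of second partial derivatives -/
noncomputable def lap (n : ℕ) (f : Euc n → ℝ) (x : Euc n) : ℝ :=
  ∑ j : Fin n,
    fderiv ℝ (fun y => fderiv ℝ f y (EuclideanSpace.single j 1)) x (EuclideanSpace.single j 1)

/-- radial Laplacian Δ_r = ∂_r² + ((n−1)/r) ∂_r -/
noncomputable def lapr (n : ℕ) (f : Euc n → ℝ) (x : Euc n) : ℝ :=
  rDeriv n (rDeriv n f) x + (((n : ℝ) - 1) / ‖x‖) * rDeriv n f x

/-- weighted L² norm squared: ‖g‖_β² = ∫ |g|² |x|^{−β} -/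
noncomputable def wnorm2 (n : ℕ) (β : ℝ) (g : Euc n → ℝ) : ℝ :=
  ∫ x : Euc n, (g x) ^ 2 * ‖x‖ ^ (-β)

end

/-! Since `T_β f = T_α f + ((α - β) / (2r)) f`, expanding the square leaves the cross term
`(α - β) ∫ f · T_α f · r^(-α-1)`, and this vanishes. Indeed `r T_α f = x·∇f + ((n-2-α)/2) f`;
as `f` vanishes near the origin, `φ = f² r^(-α-2)` is `C¹` with compact support, and the Euler
identity `∫ x·∇φ = -n ∫ φ` (the divergence theorem for the field `φ x`) turns
`∫ f (x·∇f) r^(-α-2)` into `-((n-α-2)/2) ∫ f² r^(-α-2)`. -/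

open Module

theorem ContDiff.mul_of_contDiffAt_tsupport {𝕜 E : Type*} [NontriviallyNormedField 𝕜]
    [NormedAddCommGroup E] [NormedSpace 𝕜 E] {k : WithTop ℕ∞} {f g : E → 𝕜}
    (hf : ContDiff 𝕜 k f) (hg : ∀ x ∈ tsupport f, ContDiffAt 𝕜 k g x) :
    ContDiff 𝕜 k fun x => f x * g x := by
  refine contDiff_iff_contDiffAt.2 fun x => ?_
  by_cases hx : x ∈ tsupport f
  · exact hf.contDiffAt.mul (hg x hx)
  · refine (contDiffAt_const (c := (0 : 𝕜))).congr_of_eventuallyEq ?_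
    filter_upwards [notMem_tsupport_iff_eventuallyEq.1 hx] with y hy
    simp [hy]

theorem integrable_mul_norm_rpow {E : Type*} [NormedAddCommGroup E] [MeasurableSpace E]
    [OpensMeasurableSpace E] {μ : Measure E} [IsFiniteMeasureOnCompacts μ] {H : E → ℝ}
    {K : Set E} (hH : Continuous H) (hK : IsCompact K) (h0 : (0 : E) ∉ K)
    (hHK : Function.support H ⊆ K) (p : ℝ) :
    Integrable (fun x => H x * ‖x‖ ^ p) μ := by
  refine Continuous.integrable_of_hasCompactSupport ?_ (HasCompactSupport.intro hK ?_)
  · refine continuous_iff_continuousAt.2 fun x => ?_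
    by_cases hx : x = 0
    · subst hx
      refine continuousAt_const.congr_of_eventuallyEq (f := fun _ => (0 : ℝ)) ?_
      filter_upwards [hK.isClosed.isOpen_compl.mem_nhds h0] with y hy
      rw [Function.notMem_support.1 fun h => hy (hHK h), zero_mul]
    · exact hH.continuousAt.mul
        (continuous_norm.continuousAt.rpow_const (Or.inl (norm_ne_zero_iff.2 hx)))
  · intro x hx
    rw [Function.notMem_support.1 fun h => hx (hHK h), zero_mul]

section InnerProductSpace

variable {E : Type*} [NormedAddCommGroup E] [InnerProductSpace ℝ E]

theorem fderiv_norm_rpow_apply_self {x : E} (hx : x ≠ 0) (p : ℝ) :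
    fderiv ℝ (fun y : E => ‖y‖ ^ p) x x = p * ‖x‖ ^ p := by
  have hpos : 0 < ‖x‖ ^ 2 := by positivity
  have hsq : (fun y : E => ‖y‖ ^ p) = fun y => (‖y‖ ^ 2) ^ (p / 2) := by
    funext y
    rw [← Real.rpow_natCast, ← Real.rpow_mul (norm_nonneg y)]
    ring_nf
  have hd := (hasStrictFDerivAt_norm_sq x).hasFDerivAt.rpow_const (p := p / 2) (Or.inl hpos.ne')
  rw [hsq, hd.fderiv]
  simp only [smul_apply, innerSL_apply_apply, real_inner_self_eq_norm_sq, smul_eq_mul,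
    nsmul_eq_mul, Real.rpow_sub_one hpos.ne', ← congrFun hsq x]
  field_simp
  norm_num

variable [FiniteDimensional ℝ E] [MeasurableSpace E] [BorelSpace E] {μ : Measure E}
  [μ.IsAddHaarMeasure]

/-- The divergence of `φ x` is `x·∇φ + (dim E) φ`; integrate it coordinatewise by parts. -/
theorem integral_fderiv_apply_self {φ : E → ℝ} (hφ : ContDiff ℝ 1 φ)
    (hc : HasCompactSupport φ) :
    ∫ x, fderiv ℝ φ x x ∂μ = -(finrank ℝ E) * ∫ x, φ x ∂μ := by
  let b := stdOrthonormalBasis ℝ E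
  have hint (i) : Integrable (fun x => innerSL ℝ (b i) x * fderiv ℝ φ x (b i)) μ :=
    ((innerSL ℝ (b i)).continuous.mul ((hφ.continuous_fderiv one_ne_zero).clm_apply
      continuous_const)).integrable_of_hasCompactSupport (hc.fderiv_apply ℝ (b i)).mul_left
  have hcoord (i) : ∫ x, innerSL ℝ (b i) x * fderiv ℝ φ x (b i) ∂μ = -∫ x, φ x ∂μ := by
    have hb : innerSL ℝ (b i) (b i) = 1 := by
      rw [innerSL_apply_apply, real_inner_self_eq_norm_sq, b.orthonormal.1 i, one_pow]
    have hφint : Integrable φ μ := hφ.continuous.integrable_of_hasCompactSupport hc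
    have hibp := integral_mul_fderiv_eq_neg_fderiv_mul_of_integrable (μ := μ)
      (f := innerSL ℝ (b i)) (g := φ) (v := b i)
      (by simpa only [ContinuousLinearMap.fderiv, hb, one_mul] using hφint) (hint i)
      (((innerSL ℝ (b i)).continuous.mul hφ.continuous).integrable_of_hasCompactSupport
        hc.mul_left)
      (fun x _ => (innerSL ℝ (b i)).differentiableAt)
      (fun x _ => (hφ.differentiable one_ne_zero).differentiableAt)
    simpa only [ContinuousLinearMap.fderiv, hb, one_mul] using hibp
  calc ∫ x, fderiv ℝ φ x x ∂μ
      = ∫ x, ∑ i, innerSL ℝ (b i) x * fderiv ℝ φ x (b i) ∂μ := by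
        congr 1 with x
        rw [show fderiv ℝ φ x x = fderiv ℝ φ x (∑ i, ⟪b i, x⟫ • b i) by rw [b.sum_repr']]
        simp [mul_comm]
    _ = -(finrank ℝ E) * ∫ x, φ x ∂μ := by
        rw [integral_finsetSum _ fun i _ => hint i]
        simp only [hcoord, Finset.sum_const, Finset.card_univ, Fintype.card_fin, nsmul_eq_mul]
        ring

theorem integral_mul_fderiv_apply_self_add_mul_norm_rpow_eq_zero {f : E → ℝ}
    (hf : ContDiff ℝ 1 f) (hc : HasCompactSupport f) (h0 : (0 : E) ∉ tsupport f) (p : ℝ) :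
    ∫ x, f x * (fderiv ℝ f x x + (finrank ℝ E + p) / 2 * f x) * ‖x‖ ^ p ∂μ = 0 := by
  have hne {x : E} (hx : x ∈ tsupport f) : x ≠ 0 := ne_of_mem_of_not_mem hx h0
  have hf2 : ContDiff ℝ 1 fun x => f x * f x := hf.mul hf
  set φ : E → ℝ := fun x => f x * f x * ‖x‖ ^ p with hφ_def
  have hφ : ContDiff ℝ 1 φ := hf2.mul_of_contDiffAt_tsupport fun x hx =>
    (contDiffAt_norm ℝ (hne (tsupport_mul_subset_left hx))).rpow_const_of_ne
      (norm_ne_zero_iff.2 (hne (tsupport_mul_subset_left hx)))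
  have hφc : HasCompactSupport φ := hc.mul_right.mul_right
  have hderiv (x : E) :
      fderiv ℝ φ x x = (2 * f x * fderiv ℝ f x x + p * (f x * f x)) * ‖x‖ ^ p := by
    by_cases hx : x ∈ tsupport f
    · have hw : DifferentiableAt ℝ (fun y : E => ‖y‖ ^ p) x :=
        ((contDiffAt_norm ℝ (hne hx)).rpow_const_of_ne
          (norm_ne_zero_iff.2 (hne hx))).differentiableAt one_ne_zero
      have hfx := (hf.differentiable one_ne_zero) x
      rw [hφ_def, fderiv_fun_mul (hf2.differentiable one_ne_zero x) hw, fderiv_fun_mul hfx hfx]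
      simp only [add_apply, smul_apply, smul_eq_mul, fderiv_norm_rpow_apply_self (hne hx)]
      ring
    · have hxφ : x ∉ tsupport φ := fun h =>
        hx (tsupport_mul_subset_left (tsupport_mul_subset_left h))
      simp [fderiv_of_notMem_tsupport ℝ hxφ, fderiv_of_notMem_tsupport ℝ hx,
        image_eq_zero_of_notMem_tsupport hx]
  have hφint : Integrable φ μ := hφ.continuous.integrable_of_hasCompactSupport hφc
  have hdφint : Integrable (fun x => fderiv ℝ φ x x) μ :=
    ((hφ.continuous_fderiv one_ne_zero).clm_apply continuous_id).integrable_of_hasCompactSupport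
      ((hφc.fderiv ℝ).mono' fun x hx => subset_tsupport _ fun h => hx (by simp [h]))
  calc ∫ x, f x * (fderiv ℝ f x x + (finrank ℝ E + p) / 2 * f x) * ‖x‖ ^ p ∂μ
      = ∫ x, (1 / 2) * (fderiv ℝ φ x x + finrank ℝ E * φ x) ∂μ := by
        congr 1 with x
        rw [hderiv, hφ_def]
        ring
    _ = 0 := by
        rw [integral_const_mul, integral_add hdφint (hφint.const_mul _), integral_const_mul,
          integral_fderiv_apply_self hφ hφc]
        ring

theorem integral_sq_fderiv_apply_self_add_mul_norm_rpow {f : E → ℝ} (hf : ContDiff ℝ 1 f)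
    (hc : HasCompactSupport f) (h0 : (0 : E) ∉ tsupport f) (p b : ℝ) :
    ∫ x, (fderiv ℝ f x x + ((finrank ℝ E + p) / 2 + b) * f x) ^ 2 * ‖x‖ ^ p ∂μ
      = ∫ x, (fderiv ℝ f x x + (finrank ℝ E + p) / 2 * f x) ^ 2 * ‖x‖ ^ p ∂μ
        + b ^ 2 * ∫ x, f x ^ 2 * ‖x‖ ^ p ∂μ := by
  set c : ℝ := (finrank ℝ E + p) / 2
  set D : E → ℝ := fun x => fderiv ℝ f x x
  have hint {H : E → ℝ} (hH : Continuous H) (hHf : ∀ x ∉ tsupport f, H x = 0) :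
      Integrable (fun x => H x * ‖x‖ ^ p) μ :=
    integrable_mul_norm_rpow hH hc h0 (Function.support_subset_iff'.2 hHf) p
  have hvanish {x} (hx : x ∉ tsupport f) : f x = 0 ∧ D x = 0 :=
    ⟨image_eq_zero_of_notMem_tsupport hx, by simp [D, fderiv_of_notMem_tsupport ℝ hx]⟩
  have hT : Continuous fun x => D x + c * f x :=
    ((hf.continuous_fderiv one_ne_zero).clm_apply continuous_id).add
      (continuous_const.mul hf.continuous)
  have hI₁ := hint (H := fun x => (D x + c * f x) ^ 2) (hT.pow 2) fun x hx => by
    simp [hvanish hx]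
  have hI₂ := hint (H := fun x => f x * (D x + c * f x)) (hf.continuous.mul hT) fun x hx => by
    simp [hvanish hx]
  have hI₃ := hint (H := fun x => f x ^ 2) (hf.continuous.pow 2) fun x hx => by
    simp [hvanish hx]
  calc ∫ x, (D x + (c + b) * f x) ^ 2 * ‖x‖ ^ p ∂μ
      = ∫ x, ((D x + c * f x) ^ 2 * ‖x‖ ^ p + 2 * b * (f x * (D x + c * f x) * ‖x‖ ^ p)
          + b ^ 2 * (f x ^ 2 * ‖x‖ ^ p)) ∂μ := by
        congr 1 with x
        ring
    _ = ∫ x, (D x + c * f x) ^ 2 * ‖x‖ ^ p ∂μ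
          + b ^ 2 * ∫ x, f x ^ 2 * ‖x‖ ^ p ∂μ := by
        rw [integral_add (hI₁.fun_add (hI₂.const_mul _)) (hI₃.const_mul _),
          integral_add hI₁ (hI₂.const_mul _), integral_const_mul, integral_const_mul,
          integral_mul_fderiv_apply_self_add_mul_norm_rpow_eq_zero hf hc h0, mul_zero, add_zero]

end InnerProductSpace

theorem Tw_eq_div_norm (n : ℕ) (γ : ℝ) (f : Euc n → ℝ) (x : Euc n) :
    Tw n γ f x = (fderiv ℝ f x x + ((n : ℝ) - 2 - γ) / 2 * f x) / ‖x‖ := by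
  rw [Tw, rDeriv, inner_gradient_right]
  simp only [conj_trivial]
  ring

/-- At `x = 0` the left integrand is `0` through division by `‖0‖ = 0`; `f 0 = 0` makes the
right one vanish as well. -/
theorem wnorm2_Tw_eq_integral (n : ℕ) (α γ : ℝ) {f : Euc n → ℝ} (hf0 : f 0 = 0) :
    wnorm2 n α (Tw n γ f)
      = ∫ x, (fderiv ℝ f x x + ((n : ℝ) - 2 - γ) / 2 * f x) ^ 2 * ‖x‖ ^ (-(α + 2)) := by
  rw [wnorm2]
  congr 1 with x
  rw [Tw_eq_div_norm]
  rcases eq_or_ne x 0 with rfl | hx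
  · simp [hf0]
  · have hr : 0 < ‖x‖ := norm_pos_iff.2 hx
    rw [neg_add, Real.rpow_add hr, Real.rpow_neg hr.le 2, Real.rpow_two]
    field_simp

theorem Top_shift_identity_general (n : ℕ) (α β : ℝ) (f : Euc n → ℝ)
    (hf : ContDiff ℝ 1 f) (hc : HasCompactSupport f) (h0 : (0 : Euc n) ∉ tsupport f) :
    wnorm2 n α (Tw n β f)
      = wnorm2 n α (Tw n α f) + ((β - α) ^ 2 / 4) * wnorm2 n (α + 2) f := by
  have hf0 : f 0 = 0 := image_eq_zero_of_notMem_tsupport h0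
  have h := integral_sq_fderiv_apply_self_add_mul_norm_rpow (μ := volume) hf hc h0
    (-(α + 2)) ((α - β) / 2)
  rw [finrank_euclideanSpace_fin] at h
  rw [wnorm2_Tw_eq_integral n α β hf0, wnorm2_Tw_eq_integral n α α hf0, wnorm2,
    show ((n : ℝ) - 2 - β) / 2 = (n + -(α + 2)) / 2 + (α - β) / 2 by ring,
    show ((n : ℝ) - 2 - α) / 2 = (n + -(α + 2)) / 2 by ring,
    show (β - α) ^ 2 / 4 = ((α - β) / 2) ^ 2 by ring]
  exact h

theorem Top_shift_identity (n : ℕ) (hn : 1 ≤ n) (α β : ℝ) (f : Euc n → ℝ)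
    (hf : ContDiff ℝ 1 f) (hc : HasCompactSupport f) (h0 : (0 : Euc n) ∉ tsupport f) :
    wnorm2 n α (Tw n β f)
      = wnorm2 n α (Tw n α f) + ((β - α) ^ 2 / 4) * wnorm2 n (α + 2) f :=
  Top_shift_identity_general n α β f hf hc h0
end

section
/- For n ≥ 1, α ∈ ℝ and u ∈ C²_c(ℝⁿ \ {0}), one has ‖Δ_r u‖_α² = ((n+α)²/4)‖∂_r u‖_{α+2}² + ‖T_α(∂_r u)‖_α², where Δ_r = ∂_r² + ((n−1)/r)∂_r is the radial Laplacian. In particular ‖Δ_r u‖_α² ≥ ((n+α)²/4)‖∂_r u‖_{α+2}². -/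
/-!
With `v = ∂_r u` one has `Δ_r u = T_α v + ((n + α) / (2r)) v`, so expanding the square leaves,
besides the two terms of the identity, the cross term `(n + α) ∫ T_α(v) v r^{-α-1}`.
The integrand `2 T_α(v) v r^{-α-1}` is the divergence of the vector field `v² r^{-α-2} x`,
which is `C¹` with compact support because `u` vanishes near the origin; hence the cross term
integrates to zero.
-/

open MeasureTheory Real RealInnerProductSpace

open Set Function

theorem ContDiffOn.contDiff_of_tsupport_subset {𝕜 E F : Type*} [NontriviallyNormedField 𝕜]
    [NormedAddCommGroup E] [NormedSpace 𝕜 E] [NormedAddCommGroup F] [NormedSpace 𝕜 F]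
    {f : E → F} {s : Set E} {k : WithTop ℕ∞} (hf : ContDiffOn 𝕜 k f s) (hs : IsOpen s)
    (hfs : tsupport f ⊆ s) : ContDiff 𝕜 k f := by
  refine contDiff_iff_contDiffAt.2 fun x => ?_
  by_cases hx : x ∈ tsupport f
  · exact hf.contDiffAt (hs.mem_nhds (hfs hx))
  · exact contDiffAt_const.congr_of_eventuallyEq (notMem_tsupport_iff_eventuallyEq.mp hx)

theorem tsupport_sq_mul_subset {α : Type*} [TopologicalSpace α] (f w : α → ℝ) :
    tsupport (fun x => f x ^ 2 * w x) ⊆ tsupport f :=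
  (tsupport_mul_subset_left (f := fun x => f x ^ 2)).trans
    (closure_mono (support_pow f two_ne_zero).subset)

section InnerProductSpace

variable {E : Type*} [NormedAddCommGroup E] [InnerProductSpace ℝ E]

theorem hasFDerivAt_norm_rpow_of_ne_zero {x : E} (hx : x ≠ 0) (p : ℝ) :
    HasFDerivAt (fun y : E => ‖y‖ ^ p) ((p * ‖x‖ ^ (p - 2)) • innerSL ℝ x) x := by
  apply HasStrictFDerivAt.hasFDerivAt
  convert! (hasStrictFDerivAt_norm_sq x).rpow_const (p := p / 2) (by simp [hx]) using 0
  simp_rw [← Real.rpow_natCast_mul (norm_nonneg _), ← Nat.cast_smul_eq_nsmul ℝ, smul_smul]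
  ring_nf

theorem contDiffOn_norm_rpow (k : WithTop ℕ∞) (p : ℝ) :
    ContDiffOn ℝ k (fun y : E => ‖y‖ ^ p) {0}ᶜ := fun _ hx =>
  ((contDiffAt_norm ℝ hx).rpow_const_of_ne (norm_ne_zero_iff.2 hx)).contDiffWithinAt

end InnerProductSpace

section FDerivIntegral

variable {E : Type*} [NormedAddCommGroup E] [NormedSpace ℝ E] [MeasurableSpace E] [BorelSpace E]
  (μ : Measure E) {g : E → ℝ}

theorem integrable_fderiv_apply [IsFiniteMeasureOnCompacts μ] (hg : ContDiff ℝ 1 g)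
    (hc : HasCompactSupport g) (v : E) : Integrable (fun x => fderiv ℝ g x v) μ :=
  ((hg.continuous_fderiv one_ne_zero).clm_apply continuous_const).integrable_of_hasCompactSupport
    (hc.fderiv_apply ℝ v)

theorem integral_fderiv_apply_eq_zero [FiniteDimensional ℝ E] [Measure.IsAddHaarMeasure μ]
    (hg : ContDiff ℝ 1 g) (hc : HasCompactSupport g) (v : E) :
    ∫ x, fderiv ℝ g x v ∂μ = 0 := by
  simpa using integral_mul_fderiv_eq_neg_fderiv_mul_of_integrable (μ := μ)
    (f := fun _ => (1 : ℝ)) (g := g) (v := v) (by simp)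
    (by simpa using integrable_fderiv_apply μ hg hc v)
    (by simpa using hg.continuous.integrable_of_hasCompactSupport hc)
    (fun x _ => differentiableAt_const _) (fun x _ => hg.differentiable one_ne_zero x)

end FDerivIntegral

theorem integrable_sq_mul_norm_rpow {E : Type*} [NormedAddCommGroup E] [NormedSpace ℝ E]
    [MeasurableSpace E] [OpensMeasurableSpace E] (μ : Measure E) [IsFiniteMeasureOnCompacts μ]
    {f : E → ℝ} (hf : ContinuousOn f {0}ᶜ) (hc : HasCompactSupport f)
    (h0 : (0 : E) ∉ tsupport f) (p : ℝ) : Integrable (fun x => f x ^ 2 * ‖x‖ ^ p) μ := by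
  have hsupp := tsupport_sq_mul_subset f (fun x => ‖x‖ ^ p)
  refine Continuous.integrable_of_hasCompactSupport ?_
    (hc.mono' ((subset_tsupport _).trans hsupp))
  refine ContinuousOn.continuous_of_tsupport_subset ?_ isOpen_compl_singleton
    (hsupp.trans (subset_compl_singleton_iff.2 h0))
  exact (hf.pow 2).mul (continuous_norm.continuousOn.rpow_const fun x hx =>
    Or.inl (norm_ne_zero_iff.2 hx))

section RadialDerivative

variable {n : ℕ}

theorem rDeriv_eq_fderiv_apply_div_norm (f : Euc n → ℝ) (x : Euc n) :
    rDeriv n f x = fderiv ℝ f x x / ‖x‖ := by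
  rw [rDeriv, gradient, real_inner_comm, InnerProductSpace.toDual_symm_apply]

theorem rDeriv_apply_zero (f : Euc n → ℝ) : rDeriv n f 0 = 0 := by
  simp [rDeriv]

theorem tsupport_rDeriv_subset (f : Euc n → ℝ) : tsupport (rDeriv n f) ⊆ tsupport f := by
  refine closure_minimal (fun x hx => support_fderiv_subset ℝ fun hfx => hx ?_)
    (isClosed_tsupport f)
  simp [rDeriv_eq_fderiv_apply_div_norm, hfx]

theorem tsupport_Tw_subset (α : ℝ) (f : Euc n → ℝ) :
    tsupport (Tw n α f) ⊆ tsupport f := by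
  refine closure_minimal (fun x hx => ?_) (isClosed_tsupport f)
  by_contra hxf
  have hr : rDeriv n f x = 0 :=
    image_eq_zero_of_notMem_tsupport fun h => hxf (tsupport_rDeriv_subset f h)
  exact hx (by simp [Tw, hr, image_eq_zero_of_notMem_tsupport hxf])

theorem contDiffOn_rDeriv {f : Euc n → ℝ} {k m : WithTop ℕ∞} (hf : ContDiff ℝ m f)
    (hkm : k + 1 ≤ m) :
    ContDiffOn ℝ k (rDeriv n f) {0}ᶜ := by
  rw [funext (rDeriv_eq_fderiv_apply_div_norm f)]
  exact ((hf.fderiv_right hkm).clm_apply contDiff_id).contDiffOn.div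
    (fun x hx => (contDiffAt_norm ℝ hx).contDiffWithinAt) fun x hx => norm_ne_zero_iff.2 hx

theorem continuousOn_Tw (α : ℝ) {f : Euc n → ℝ} (hf : ContDiff ℝ 1 f) :
    ContinuousOn (Tw n α f) {0}ᶜ :=
  (contDiffOn_rDeriv hf (by norm_num) (k := 0)).continuousOn.add <|
    (continuousOn_const.div (continuous_const.mul continuous_norm).continuousOn
      fun x hx => mul_ne_zero two_ne_zero (norm_ne_zero_iff.2 hx)).mul hf.continuous.continuousOn

end RadialDerivative

/-- The divergence of the vector field `x ↦ g x • x` on `ℝⁿ`. -/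
noncomputable def divRadialField (n : ℕ) (g : Euc n → ℝ) (x : Euc n) : ℝ :=
  n * g x + fderiv ℝ g x x

section RadialField

variable {n : ℕ} {g : Euc n → ℝ}

theorem sum_fderiv_mul_coord {x : Euc n} (hg : DifferentiableAt ℝ g x) :
    ∑ j, fderiv ℝ (fun y => g y * y j) x (EuclideanSpace.single j 1)
      = divRadialField n g x := by
  have hcoord (j : Fin n) : fderiv ℝ (fun y => g y * y j) x (EuclideanSpace.single j 1)
      = g x + x j * fderiv ℝ g x (EuclideanSpace.single j 1) := by
    have hproj :
        HasFDerivAt (fun y : Euc n => y j) (EuclideanSpace.proj j : Euc n →L[ℝ] ℝ) x :=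
      (EuclideanSpace.proj j : Euc n →L[ℝ] ℝ).hasFDerivAt
    rw [(hg.hasFDerivAt.fun_mul hproj).fderiv]
    simp
  have hx : ∑ j, x j • EuclideanSpace.single j (1 : ℝ) = x := by
    simpa using (EuclideanSpace.basisFun (Fin n) ℝ).sum_repr x
  simp_rw [hcoord, Finset.sum_add_distrib, ← smul_eq_mul, ← map_smul, ← map_sum, hx]
  simp [divRadialField]

theorem divRadialField_eq_sum (hg : ContDiff ℝ 1 g) :
    divRadialField n g
      = fun x => ∑ j, fderiv ℝ (fun y => g y * y j) x (EuclideanSpace.single j 1) :=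
  funext fun x => (sum_fderiv_mul_coord (hg.differentiable one_ne_zero x)).symm

theorem contDiff_mul_coord (hg : ContDiff ℝ 1 g) (j : Fin n) :
    ContDiff ℝ 1 (fun y : Euc n => g y * y j) :=
  hg.mul (EuclideanSpace.proj j : Euc n →L[ℝ] ℝ).contDiff

theorem integrable_divRadialField (hg : ContDiff ℝ 1 g) (hc : HasCompactSupport g) :
    Integrable (divRadialField n g) := by
  rw [divRadialField_eq_sum hg]
  exact integrable_finsetSum _ fun j _ =>
    integrable_fderiv_apply volume (contDiff_mul_coord hg j) hc.mul_right _

theorem integral_divRadialField_eq_zero (hg : ContDiff ℝ 1 g) (hc : HasCompactSupport g) :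
    ∫ x, divRadialField n g x = 0 := by
  simp_rw [divRadialField_eq_sum hg]
  rw [integral_finsetSum _ fun j _ =>
    integrable_fderiv_apply volume (contDiff_mul_coord hg j) hc.mul_right _]
  exact Finset.sum_eq_zero fun j _ =>
    integral_fderiv_apply_eq_zero volume (contDiff_mul_coord hg j) hc.mul_right _

end RadialField

section WeightedIdentity

variable {n : ℕ}

theorem divRadialField_sq_mul_norm_rpow (α : ℝ) {v : Euc n → ℝ} {x : Euc n}
    (hv : DifferentiableAt ℝ v x) (hx : x ≠ 0) :
    divRadialField n (fun y => v y ^ 2 * ‖y‖ ^ (-(α + 2))) x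
      = 2 * (Tw n α v x * v x * ‖x‖ ^ (-(α + 1))) := by
  have hr : 0 < ‖x‖ := norm_pos_iff.2 hx
  have hD := (hv.hasFDerivAt.pow 2).fun_mul (hasFDerivAt_norm_rpow_of_ne_zero hx (-(α + 2)))
  have hsub : ‖x‖ ^ (-(α + 2) - 2) = ‖x‖ ^ (-(α + 2)) / ‖x‖ ^ 2 := by
    rw [Real.rpow_sub hr, Real.rpow_two]
  have hadd : ‖x‖ ^ (-(α + 1)) = ‖x‖ ^ (-(α + 2)) * ‖x‖ := by
    rw [show -(α + 1) = -(α + 2) + 1 by ring, Real.rpow_add hr, Real.rpow_one]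
  rw [divRadialField, hD.fderiv, Tw, rDeriv_eq_fderiv_apply_div_norm, hsub, hadd]
  simp only [add_apply, smul_apply, innerSL_apply_apply,
    real_inner_self_eq_norm_sq, smul_eq_mul]
  field_simp
  ring

theorem sq_rDeriv_add_mul_norm_rpow_eq (α : ℝ) {v : Euc n → ℝ} {x : Euc n}
    (hv : DifferentiableAt ℝ v x) (hx : x ≠ 0) :
    (rDeriv n v x + ((n - 1) / ‖x‖) * v x) ^ 2 * ‖x‖ ^ (-α)
      = Tw n α v x ^ 2 * ‖x‖ ^ (-α) + ((n + α) ^ 2 / 4) * (v x ^ 2 * ‖x‖ ^ (-(α + 2)))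
        + ((n + α) / 2) * divRadialField n (fun y => v y ^ 2 * ‖y‖ ^ (-(α + 2))) x := by
  have hr : 0 < ‖x‖ := norm_pos_iff.2 hx
  have h1 : ‖x‖ ^ (-(α + 1)) = ‖x‖ ^ (-α) / ‖x‖ := by
    rw [show -(α + 1) = -α - 1 by ring, Real.rpow_sub hr, Real.rpow_one]
  have h2 : ‖x‖ ^ (-(α + 2)) = ‖x‖ ^ (-α) / ‖x‖ ^ 2 := by
    rw [show -(α + 2) = -α - 2 by ring, Real.rpow_sub hr, Real.rpow_two]
  rw [divRadialField_sq_mul_norm_rpow α hv hx, Tw, h1, h2]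
  field_simp
  ring

theorem wnorm2_nonneg (β : ℝ) (f : Euc n → ℝ) : 0 ≤ wnorm2 n β f :=
  integral_nonneg fun x => mul_nonneg (sq_nonneg _) (Real.rpow_nonneg (norm_nonneg x) _)

theorem wnorm2_rDeriv_add_eq (α : ℝ) {v : Euc n → ℝ} (hv : ContDiff ℝ 1 v)
    (hc : HasCompactSupport v) (h0 : (0 : Euc n) ∉ tsupport v) :
    wnorm2 n α (fun x => rDeriv n v x + ((n - 1) / ‖x‖) * v x)
      = ((n + α) ^ 2 / 4) * wnorm2 n (α + 2) v + wnorm2 n α (Tw n α v) := by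
  set g : Euc n → ℝ := fun y => v y ^ 2 * ‖y‖ ^ (-(α + 2)) with hg_def
  have hgv : tsupport g ⊆ tsupport v := tsupport_sq_mul_subset v _
  have hg : ContDiff ℝ 1 g :=
    ((hv.contDiffOn.pow 2).mul (contDiffOn_norm_rpow 1 _)).contDiff_of_tsupport_subset
      isOpen_compl_singleton (hgv.trans (subset_compl_singleton_iff.2 h0))
  have hgc : HasCompactSupport g := hc.mono' ((subset_tsupport g).trans hgv)
  have hpoint (x : Euc n) : (rDeriv n v x + ((n - 1) / ‖x‖) * v x) ^ 2 * ‖x‖ ^ (-α)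
      = Tw n α v x ^ 2 * ‖x‖ ^ (-α) + ((n + α) ^ 2 / 4) * g x
        + ((n + α) / 2) * divRadialField n g x := by
    rcases eq_or_ne x 0 with rfl | hx
    -- every term vanishes at the origin, since `v 0 = 0` and division by `‖0‖ = 0` gives `0`
    · have hv0 : v 0 = 0 := image_eq_zero_of_notMem_tsupport h0
      simp [rDeriv_apply_zero, Tw, divRadialField, hg_def, hv0]
    · exact sq_rDeriv_add_mul_norm_rpow_eq α (hv.differentiable one_ne_zero x) hx
  have hTw : Integrable (fun x => Tw n α v x ^ 2 * ‖x‖ ^ (-α)) :=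
    integrable_sq_mul_norm_rpow volume (continuousOn_Tw α hv)
      (hc.mono' ((subset_tsupport _).trans (tsupport_Tw_subset α v)))
      (fun h => h0 (tsupport_Tw_subset α v h)) _
  have hgi : Integrable g := integrable_sq_mul_norm_rpow volume hv.continuous.continuousOn hc h0 _
  have hsum : Integrable (fun x => Tw n α v x ^ 2 * ‖x‖ ^ (-α) + ((n + α) ^ 2 / 4) * g x) :=
    hTw.add (hgi.const_mul _)
  simp only [wnorm2, hpoint]
  rw [integral_add hsum ((integrable_divRadialField hg hgc).const_mul _),
    integral_add hTw (hgi.const_mul _), integral_const_mul, integral_const_mul,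
    integral_divRadialField_eq_zero hg hgc]
  ring

end WeightedIdentity

theorem radial_laplacian_identity_general (n : ℕ) (α : ℝ) (u : Euc n → ℝ)
    (hu : ContDiff ℝ 2 u) (hc : HasCompactSupport u) (h0 : (0 : Euc n) ∉ tsupport u) :
    wnorm2 n α (lapr n u)
        = (((n : ℝ) + α) ^ 2 / 4) * wnorm2 n (α + 2) (rDeriv n u)
          + wnorm2 n α (Tw n α (rDeriv n u)) ∧
    wnorm2 n α (lapr n u) ≥ (((n : ℝ) + α) ^ 2 / 4) * wnorm2 n (α + 2) (rDeriv n u) := by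
  have hvu : tsupport (rDeriv n u) ⊆ tsupport u := tsupport_rDeriv_subset u
  have hv : ContDiff ℝ 1 (rDeriv n u) :=
    (contDiffOn_rDeriv hu (by norm_num)).contDiff_of_tsupport_subset isOpen_compl_singleton
      (hvu.trans (subset_compl_singleton_iff.2 h0))
  have hid : wnorm2 n α (lapr n u) = _ :=
    wnorm2_rDeriv_add_eq α hv (hc.mono' ((subset_tsupport _).trans hvu)) fun h => h0 (hvu h)
  exact ⟨hid, hid ▸ le_add_of_nonneg_right (wnorm2_nonneg α _)⟩

theorem radial_laplacian_identity (n : ℕ) (hn : 1 ≤ n) (α : ℝ) (u : Euc n → ℝ)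
    (hu : ContDiff ℝ 2 u) (hc : HasCompactSupport u) (h0 : (0 : Euc n) ∉ tsupport u) :
    wnorm2 n α (lapr n u)
        = (((n : ℝ) + α) ^ 2 / 4) * wnorm2 n (α + 2) (rDeriv n u)
          + wnorm2 n α (Tw n α (rDeriv n u)) ∧
    wnorm2 n α (lapr n u) ≥ (((n : ℝ) + α) ^ 2 / 4) * wnorm2 n (α + 2) (rDeriv n u) :=
  radial_laplacian_identity_general n α u hu hc h0
end
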